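/- arXiv:0904.4512 — 4 statements merged into one kernel-verified Lean document; each statement's English description precedes it below -/
import Mathlib

section
/- For any activity network G=(V,E) with workload t and its level-constrained extension G_L, the slowdown T(G_L)/T(G) is at most ρ = max{t(a) : a∈V} / min{t(a) : a∈V}. -/
/-!
Let `d` be the depth of `G`. A longest chain of `G` has `d` activities, so `T(G) ≥ d · min t`.
Activities of equal level are incomparable in `G_L`, so a chain of `G_L` has pairwise distinct
levels, all in `{1, …, d}`; hence it has at most `d` activities and `T(G_L) ≤ d · max t`.
-/

/-- A finset is a chain w.r.t. relation `E`: any two distinct members are comparable. -/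
def IsChainIn {V : Type*} (E : V → V → Prop) (C : Finset V) : Prop :=
  ∀ a ∈ C, ∀ b ∈ C, a ≠ b → E a b ∨ E b a

/-- Makespan: supremum over chains of total duration. -/
noncomputable def makespan {V : Type*} [Fintype V] [DecidableEq V]
    (E : V → V → Prop) (t : V → ℝ) : ℝ :=
  sSup {x | ∃ C : Finset V, IsChainIn E C ∧ x = ∑ a ∈ C, t a}

/-- Level of an activity: maximum size of a chain ending at `a`. -/
noncomputable def level {V : Type*} [Fintype V] [DecidableEq V]
    (E : V → V → Prop) (a : V) : ℕ :=
  sSup {n | ∃ C : Finset V, IsChainIn E C ∧ a ∈ C ∧ (∀ b ∈ C, b ≠ a → E b a) ∧ C.card = n}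

/-- Depth: size of a longest chain. -/
noncomputable def depth {V : Type*} [Fintype V] [DecidableEq V]
    (E : V → V → Prop) : ℕ :=
  sSup {n | ∃ C : Finset V, IsChainIn E C ∧ C.card = n}

lemma isChainIn_empty {V : Type*} (E : V → V → Prop) : IsChainIn E ∅ := by
  simp [IsChainIn]

lemma isChainIn_singleton {V : Type*} (E : V → V → Prop) (a : V) : IsChainIn E {a} := by
  simp +contextual [IsChainIn]

section Chains

variable {V : Type*} [Fintype V] [DecidableEq V] (E : V → V → Prop)

lemma sum_le_makespan (t : V → ℝ) {C : Finset V} (hC : IsChainIn E C) :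
    ∑ a ∈ C, t a ≤ makespan E t := by
  refine le_csSup ?_ ⟨C, hC, rfl⟩
  refine ((Set.finite_range fun C : Finset V => ∑ a ∈ C, t a).subset ?_).bddAbove
  rintro x ⟨C, -, rfl⟩
  exact ⟨C, rfl⟩

lemma makespan_le {t : V → ℝ} {c : ℝ} (h : ∀ C, IsChainIn E C → ∑ a ∈ C, t a ≤ c) :
    makespan E t ≤ c := by
  refine csSup_le ⟨0, ∅, isChainIn_empty E, by simp⟩ ?_
  rintro x ⟨C, hC, rfl⟩
  exact h C hC

lemma card_le_depth {C : Finset V} (hC : IsChainIn E C) : C.card ≤ depth E := by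
  refine le_csSup ⟨Fintype.card V, ?_⟩ ⟨C, hC, rfl⟩
  rintro n ⟨C, -, rfl⟩
  exact C.card_le_univ

lemma exists_isChainIn_card_eq_depth : ∃ C : Finset V, IsChainIn E C ∧ C.card = depth E := by
  obtain ⟨C, hC, hcard⟩ : depth E ∈ {n | ∃ C : Finset V, IsChainIn E C ∧ C.card = n} := by
    refine Nat.sSup_mem ⟨0, ∅, isChainIn_empty E, rfl⟩ ⟨Fintype.card V, ?_⟩
    rintro n ⟨C, -, rfl⟩
    exact C.card_le_univ
  exact ⟨C, hC, hcard⟩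

lemma depth_pos [Nonempty V] : 0 < depth E :=
  card_le_depth E (isChainIn_singleton E (Classical.arbitrary V))

lemma one_le_level (a : V) : 1 ≤ level E a := by
  refine le_csSup ⟨Fintype.card V, ?_⟩
    ⟨{a}, isChainIn_singleton E a, Finset.mem_singleton_self a, by simp, rfl⟩
  rintro n ⟨C, -, -, -, rfl⟩
  exact C.card_le_univ

lemma level_le_depth (a : V) : level E a ≤ depth E := by
  refine csSup_le ⟨1, {a}, isChainIn_singleton E a, Finset.mem_singleton_self a, by simp, rfl⟩ ?_
  rintro n ⟨C, hC, -, -, rfl⟩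
  exact card_le_depth E hC

lemma card_le_depth_of_isChainIn_level {C : Finset V}
    (hC : IsChainIn (fun a b => level E a < level E b) C) : C.card ≤ depth E := by
  have hinj : Set.InjOn (level E) C := by
    intro a ha b hb hab
    by_contra hne
    rcases hC a ha b hb hne with h | h <;> omega
  have hmaps : Set.MapsTo (level E) C (Finset.Icc 1 (depth E)) := fun a _ =>
    Finset.mem_Icc.mpr ⟨one_le_level E a, level_le_depth E a⟩
  simpa using Finset.card_le_card_of_injOn (level E) hmaps hinj

lemma depth_mul_le_makespan {t : V → ℝ} {m : ℝ} (hm : ∀ a, m ≤ t a) :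
    depth E * m ≤ makespan E t := by
  obtain ⟨C, hC, hcard⟩ := exists_isChainIn_card_eq_depth E
  calc (depth E : ℝ) * m = C.card • m := by rw [nsmul_eq_mul, hcard]
    _ ≤ ∑ a ∈ C, t a := C.card_nsmul_le_sum t m fun a _ => hm a
    _ ≤ makespan E t := sum_le_makespan E t hC

lemma makespan_level_le_depth_mul {t : V → ℝ} {M : ℝ} (hM : ∀ a, t a ≤ M) (hM₀ : 0 ≤ M) :
    makespan (fun a b => level E a < level E b) t ≤ depth E * M := by
  refine makespan_le _ fun C hC => ?_
  calc ∑ a ∈ C, t a ≤ C.card • M := C.sum_le_card_nsmul t M fun a _ => hM a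
    _ = C.card * M := nsmul_eq_mul _ _
    _ ≤ depth E * M := by
      gcongr
      exact_mod_cast card_le_depth_of_isChainIn_level E hC

end Chains

theorem lc_slowdown_le_rho_general {V : Type*} [Fintype V] [DecidableEq V] [Nonempty V]
    (E : V → V → Prop) (t : V → ℝ)
    (ht : ∀ a, 0 < t a) :
    makespan (fun a b => level E a < level E b) t / makespan E t ≤
      (Finset.univ.sup' Finset.univ_nonempty t) /
        (Finset.univ.inf' Finset.univ_nonempty t) := by
  set M := Finset.univ.sup' Finset.univ_nonempty t
  set m := Finset.univ.inf' Finset.univ_nonempty t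
  have hm : 0 < m := (Finset.lt_inf'_iff _).mpr fun a _ => ht a
  have hd : (0 : ℝ) < depth E := by exact_mod_cast depth_pos E
  have hM : 0 ≤ M := (ht (Classical.arbitrary V)).le.trans (Finset.le_sup' t (Finset.mem_univ _))
  have hlow := depth_mul_le_makespan E (m := m) fun a => Finset.inf'_le t (Finset.mem_univ a)
  have hup := makespan_level_le_depth_mul E (M := M)
    (fun a => Finset.le_sup' t (Finset.mem_univ a)) hM
  calc _ ≤ depth E * M / (depth E * m) :=
        div_le_div₀ (mul_nonneg hd.le hM) hup (mul_pos hd hm) hlow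
    _ = M / m := mul_div_mul_left _ _ hd.ne'

/-- the slowdown of the level-constrained extension is bounded by
ρ, the ratio of the largest to the smallest duration. -/
theorem lc_slowdown_le_rho {V : Type*} [Fintype V] [DecidableEq V] [Nonempty V]
    (E : V → V → Prop) (t : V → ℝ)
    (htrans : Transitive E) (hirr : Irreflexive E)
    (ht : ∀ a, 0 < t a) :
    makespan (fun a b => level E a < level E b) t / makespan E t ≤
      (Finset.univ.sup' Finset.univ_nonempty t) /
        (Finset.univ.inf' Finset.univ_nonempty t) :=
  lc_slowdown_le_rho_general E t ht
end

section
/- In the neighbour-synchronisation network ns(3,3,3), if the activity set is partitioned into two parts α and β such that in some extension every activity of α precedes every activity of β (and the partition respects the original precedences), then at least one of the induced subnetworks G|_α, G|_β contains an induced N and hence is not series-parallel. -/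
/-- One generating precedence constraint of the neighbour-synchronisation
network ns(d,w,3): from a_{i,j} to a_{i+1,j+k}, k ∈ {−1,0,1}. -/
def nsStep (d w : ℕ) (a b : Fin d × Fin w) : Prop :=
  (b.1 : ℕ) = (a.1 : ℕ) + 1 ∧ ((b.2 : ℤ) - (a.2 : ℤ)).natAbs ≤ 1

/-- The precedence relation of ns(d,w,3): transitive closure of the generators. -/
def nsRel (d w : ℕ) : Fin d × Fin w → Fin d × Fin w → Prop :=
  Relation.TransGen (nsStep d w)

/-- An induced N inside the set s: four distinct elements a,b,c,d of s with
a<c, a<d, b<d and a,b incomparable, c,d incomparable, b,c incomparable. -/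
def HasInducedNIn {V : Type*} (E : V → V → Prop) (s : Finset V) : Prop :=
  ∃ a b c d : V, a ∈ s ∧ b ∈ s ∧ c ∈ s ∧ d ∈ s ∧
    a ≠ b ∧ a ≠ c ∧ a ≠ d ∧ b ≠ c ∧ b ≠ d ∧ c ≠ d ∧
    E a c ∧ E a d ∧ E b d ∧
    ¬ E a b ∧ ¬ E b a ∧ ¬ E c d ∧ ¬ E d c ∧ ¬ E b c ∧ ¬ E c b

/- Reachability in ns(d,w,3) is a light cone: `(i,j) < (i',j')` iff `i < i'` and
`|j' - j| ≤ i' - i`. Two of the three middle-row activities lie on the same side of the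
partition. Any two of them are the tops of an induced N whose bottoms are in the first row, and
the bottoms of an induced N whose tops are in the last row; so they yield an induced N in `α` if
they lie in the down-closed `α`, and in `αᶜ` if they lie in the up-closed `αᶜ`. -/

section InducedN

variable {V : Type*} {E : V → V → Prop} {s : Finset V} {a b c d : V}

def IsInducedN (E : V → V → Prop) (a b c d : V) : Prop :=
  a ≠ b ∧ a ≠ c ∧ a ≠ d ∧ b ≠ c ∧ b ≠ d ∧ c ≠ d ∧
    E a c ∧ E a d ∧ E b d ∧
    ¬ E a b ∧ ¬ E b a ∧ ¬ E c d ∧ ¬ E d c ∧ ¬ E b c ∧ ¬ E c b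

instance [DecidableEq V] [DecidableRel E] : Decidable (IsInducedN E a b c d) := by
  unfold IsInducedN; infer_instance

theorem IsInducedN.hasInducedNIn (hN : IsInducedN E a b c d)
    (ha : a ∈ s) (hb : b ∈ s) (hc : c ∈ s) (hd : d ∈ s) : HasInducedNIn E s :=
  ⟨a, b, c, d, ha, hb, hc, hd, hN⟩

theorem IsInducedN.hasInducedNIn_of_lowerClosed (hs : ∀ x y, E x y → y ∈ s → x ∈ s)
    (hN : IsInducedN E a b c d) (hc : c ∈ s) (hd : d ∈ s) : HasInducedNIn E s := by
  have ⟨_, _, _, _, _, _, hac, _, hbd, _⟩ := hN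
  exact hN.hasInducedNIn (hs _ _ hac hc) (hs _ _ hbd hd) hc hd

theorem IsInducedN.hasInducedNIn_of_upperClosed (hs : ∀ x y, E x y → x ∈ s → y ∈ s)
    (hN : IsInducedN E a b c d) (ha : a ∈ s) (hb : b ∈ s) : HasInducedNIn E s := by
  have ⟨_, _, _, _, _, _, hac, _, hbd, _⟩ := hN
  exact hN.hasInducedNIn ha hb (hs _ _ hac ha) (hs _ _ hbd hb)

end InducedN

section NeighbourSynchronisation

variable {d w : ℕ}

theorem nsRel.lt_and_natAbs_le {a b : Fin d × Fin w} (h : nsRel d w a b) :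
    (a.1 : ℕ) < b.1 ∧ ((b.2 : ℤ) - a.2).natAbs ≤ (b.1 : ℕ) - a.1 := by
  induction h with
  | single hab => obtain ⟨h1, h2⟩ := hab; omega
  | tail _ hcb ih => obtain ⟨h1, h2⟩ := hcb; omega

theorem nsRel_of_natAbs_le (a : Fin d × Fin w) (n : ℕ) :
    ∀ b : Fin d × Fin w, (b.1 : ℕ) = a.1 + n + 1 → ((b.2 : ℤ) - a.2).natAbs ≤ n + 1 →
      nsRel d w a b := by
  induction n with
  | zero => exact fun b h1 h2 => .single ⟨h1, h2⟩
  | succ n ih =>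
    intro b h1 h2
    -- step back to the previous row, moving the column at most one towards `a.2`
    let c : Fin d × Fin w :=
      (⟨b.1 - 1, by omega⟩, ⟨min (max b.2 (a.2 - (n + 1))) (a.2 + (n + 1)), by omega⟩)
    refine .tail (ih c ?_ ?_) ⟨?_, ?_⟩ <;> simp only [c] <;> omega

theorem nsRel_iff {a b : Fin d × Fin w} :
    nsRel d w a b ↔ (a.1 : ℕ) < b.1 ∧ ((b.2 : ℤ) - a.2).natAbs ≤ (b.1 : ℕ) - a.1 :=
  ⟨nsRel.lt_and_natAbs_le, fun ⟨h1, h2⟩ =>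
    nsRel_of_natAbs_le a (b.1 - a.1 - 1) b (by omega) (by omega)⟩

instance : DecidableRel (nsRel d w) := fun _ _ => decidable_of_iff _ nsRel_iff.symm

end NeighbourSynchronisation

section NS333

variable {s : Finset (Fin 3 × Fin 3)} {j k : Fin 3}

theorem hasInducedNIn_of_lowerClosed_of_two_mem_middle_row
    (hs : ∀ x y, nsRel 3 3 x y → y ∈ s → x ∈ s) (hjk : j ≠ k)
    (hj : (1, j) ∈ s) (hk : (1, k) ∈ s) : HasInducedNIn (nsRel 3 3) s := by
  wlog hlt : j < k generalizing j k
  · exact this hjk.symm hk hj (hjk.lt_or_gt.resolve_left hlt)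
  fin_cases j <;> fin_cases k <;> try exact absurd hlt (by decide)
  · exact IsInducedN.hasInducedNIn_of_lowerClosed hs (a := (0, 0)) (b := (0, 2)) (by decide) hj hk
  · exact IsInducedN.hasInducedNIn_of_lowerClosed hs (a := (0, 1)) (b := (0, 2)) (by decide) hj hk
  · exact IsInducedN.hasInducedNIn_of_lowerClosed hs (a := (0, 2)) (b := (0, 0)) (by decide) hk hj

theorem hasInducedNIn_of_upperClosed_of_two_mem_middle_row
    (hs : ∀ x y, nsRel 3 3 x y → x ∈ s → y ∈ s) (hjk : j ≠ k)
    (hj : (1, j) ∈ s) (hk : (1, k) ∈ s) : HasInducedNIn (nsRel 3 3) s := by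
  wlog hlt : j < k generalizing j k
  · exact this hjk.symm hk hj (hjk.lt_or_gt.resolve_left hlt)
  fin_cases j <;> fin_cases k <;> try exact absurd hlt (by decide)
  · exact IsInducedN.hasInducedNIn_of_upperClosed hs (c := (2, 2)) (d := (2, 1)) (by decide) hk hj
  · exact IsInducedN.hasInducedNIn_of_upperClosed hs (c := (2, 0)) (d := (2, 1)) (by decide) hj hk
  · exact IsInducedN.hasInducedNIn_of_upperClosed hs (c := (2, 0)) (d := (2, 1)) (by decide) hj hk

end NS333

theorem ns333_series_part_not_sp_general (α : Finset (Fin 3 × Fin 3))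
    (hresp : ∀ a b, nsRel 3 3 a b → b ∈ α → a ∈ α) :
    HasInducedNIn (nsRel 3 3) α ∨ HasInducedNIn (nsRel 3 3) αᶜ := by
  obtain ⟨j, k, hjk, hside⟩ := Fintype.exists_ne_map_eq_of_card_lt
    (fun j : Fin 3 => ((1, j) : Fin 3 × Fin 3) ∈ α) (by simp)
  by_cases hj : ((1, j) : Fin 3 × Fin 3) ∈ α
  · exact .inl (hasInducedNIn_of_lowerClosed_of_two_mem_middle_row hresp hjk hj (hside ▸ hj))
  · have hup : ∀ x y, nsRel 3 3 x y → x ∈ αᶜ → y ∈ αᶜ := fun x y hxy hx =>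
      Finset.mem_compl.2 fun hy => Finset.mem_compl.1 hx (hresp x y hxy hy)
    exact .inr (hasInducedNIn_of_upperClosed_of_two_mem_middle_row hup hjk
      (Finset.mem_compl.2 hj) (Finset.mem_compl.2 (hside ▸ hj)))

/-- in ns(3,3,3), for any partition (α, β) respecting the
precedences (as arises from a series composition α·β of an extension), at
least one of the induced subnetworks on α or on β contains an induced N,
hence is not series-parallel. -/
theorem ns333_series_part_not_sp (α : Finset (Fin 3 × Fin 3))
    (hα : α.Nonempty) (hβ : αᶜ.Nonempty)
    (hresp : ∀ a b, nsRel 3 3 a b → b ∈ α → a ∈ α) :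
    HasInducedNIn (nsRel 3 3) α ∨ HasInducedNIn (nsRel 3 3) αᶜ :=
  ns333_series_part_not_sp_general α hresp
end

section
/- Let the N network have activities a,b,c,d with precedences (a,c),(a,d),(b,d) and workload t with positive values (write a,b,c,d for the durations). Then min{ T(K), T(X), T(V) } ≤ (4/3)·T(N), where T(N)=max{a+c, a+d, b+d}, T(K)=max{a+c, a+b+d}, T(X)=max{a+c, a+d, b+c, b+d}, T(V)=max{a+c+d, b+d}. -/
/-!
Compared with the N network, each of the three extensions K, X, V creates exactly one new
path: `a + b + d`, `b + c` and `a + c + d` respectively, so its makespan is at most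
`max T(N) ℓ` for that path length `ℓ`. The three new paths together use every edge of the two
chains `a, c` and `b, d` twice, so their lengths sum to `2(a + c) + 2(b + d) ≤ 4 T(N)`,
and the shortest of them is at most `(4/3) T(N)`.
-/

theorem three_mul_min_min_le_add {α : Type*} [CommSemiring α] [LinearOrder α]
    [IsOrderedAddMonoid α] (x y z : α) : 3 * min (min x y) z ≤ x + y + z := by
  have h : 3 * min (min x y) z = min (min x y) z + min (min x y) z + min (min x y) z := by ring
  rw [h]
  gcongr
  · exact (min_le_left _ _).trans (min_le_left _ _)
  · exact (min_le_left _ _).trans (min_le_right _ _)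
  · exact min_le_right _ _

theorem min_sp_extension_le_four_thirds_general (a b c d : ℝ)
    (ha : 0 < a) (hc : 0 < c) :
    min (min (max (a + c) (a + b + d))
             (max (max (a + c) (a + d)) (max (b + c) (b + d))))
        (max (a + c + d) (b + d)) ≤
      (4 / 3) * max (max (a + c) (a + d)) (b + d) := by
  set T := max (max (a + c) (a + d)) (b + d)
  have hac : a + c ≤ T := le_max_of_le_left (le_max_left _ _)
  have had : a + d ≤ T := le_max_of_le_left (le_max_right _ _)
  have hbd : b + d ≤ T := le_max_right _ _
  have hK : max (a + c) (a + b + d) ≤ max T (a + b + d) := max_le_max_right _ hac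
  have hX : max (max (a + c) (a + d)) (max (b + c) (b + d)) ≤ max T (b + c) :=
    max_le (le_max_of_le_left (max_le hac had)) (max_le (le_max_right _ _) (le_max_of_le_left hbd))
  have hV : max (a + c + d) (b + d) ≤ max T (a + c + d) :=
    max_le (le_max_right _ _) (le_max_of_le_left hbd)
  have hpaths : 3 * min (min (a + b + d) (b + c)) (a + c + d) ≤ 4 * T :=
    calc 3 * min (min (a + b + d) (b + c)) (a + c + d)
        ≤ (a + b + d) + (b + c) + (a + c + d) := three_mul_min_min_le_add _ _ _
      _ = 2 * (a + c) + 2 * (b + d) := by ring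
      _ ≤ 4 * T := by linarith
  calc _ ≤ min (min (max T (a + b + d)) (max T (b + c))) (max T (a + c + d)) :=
        min_le_min (min_le_min hK hX) hV
    _ = max T (min (min (a + b + d) (b + c)) (a + c + d)) := by
        rw [max_min_distrib_left, max_min_distrib_left]
    _ ≤ 4 / 3 * T := max_le (by linarith) (by linarith)

/-- for the N network with durations a,b,c,d, the best of the
three minimal SP extensions K, X, V has makespan at most (4/3)·T(N). -/
theorem min_sp_extension_le_four_thirds (a b c d : ℝ)
    (ha : 0 < a) (hb : 0 < b) (hc : 0 < c) (hd : 0 < d) :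
    min (min (max (a + c) (a + b + d))
             (max (max (a + c) (a + d)) (max (b + c) (b + d))))
        (max (a + c + d) (b + d)) ≤
      (4 / 3) * max (max (a + c) (a + d)) (b + d) :=
  min_sp_extension_le_four_thirds_general a b c d ha hc
end

section
/- For positive reals a,b,c,d, if a+b+d ≤ b+c and a+b+d ≤ a+c+d (equivalently a+d ≤ c and b ≤ c), then 3(a+b+d) ≤ 4·max{a+c, b+d}. -/
theorem key_maxplus_inequality_general (a b c d : ℝ)
    (h1 : a + b + d ≤ b + c) (h2 : a + b + d ≤ a + c + d) :
    3 * (a + b + d) ≤ 4 * max (a + c) (b + d) := by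
  -- The maximum dominates the average, and `a + b + d ≤ 2 * c` by adding the hypotheses.
  have hac := le_max_left (a + c) (b + d)
  have hbd := le_max_right (a + c) (b + d)
  linarith

/-- the key max-plus inequality for the K extension of N:
if a+b+d ≤ b+c and a+b+d ≤ a+c+d then 3(a+b+d) ≤ 4·max{a+c, b+d}. -/
theorem key_maxplus_inequality (a b c d : ℝ)
    (ha : 0 < a) (hb : 0 < b) (hc : 0 < c) (hd : 0 < d)
    (h1 : a + b + d ≤ b + c) (h2 : a + b + d ≤ a + c + d) :
    3 * (a + b + d) ≤ 4 * max (a + c) (b + d) :=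
  key_maxplus_inequality_general a b c d h1 h2
end
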